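/- arXiv:1809.04627 — 3 statements merged into one kernel-verified Lean document; each statement's English description precedes it below -/
import Mathlib

section
/- Every additive subgroup A of ℚ containing 1 is generated by the set of fractions 1/p^{h_p} where p ranges over the primes and h_p ∈ ℕ ∪ {∞} is the supremum of the exponents n such that 1/p^n ∈ A (with h_p = ∞ meaning all 1/p^n are generators). -/
/-!
If `q = m / d ∈ A` in lowest terms, Bézout applied to `m • (1/d) = q` and `d • (1/d) = 1` puts
`1/d` in `A`, and `q` is a multiple of `1/d`. Splitting `d` into coprime prime powers, Bézout
again shows that `1/d` lies in the group generated by the `1/p^k ∈ A` with `p^k ∣ d`, and these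
are exactly the generators `1/p^k` with `k ≤ h_p(A)`, since `1/p^n ∈ A` forces `1/p^k ∈ A` for
`k ≤ n`.
-/

/-- The p-height of a subgroup `A` of `ℚ` (containing 1): the supremum in `ℕ∞`
of the exponents `n` with `1/p^n ∈ A`. -/
noncomputable def ratHeight (A : AddSubgroup ℚ) (p : ℕ) : ℕ∞ :=
  ⨆ n ∈ {n : ℕ | (1 : ℚ) / p ^ n ∈ A}, (n : ℕ∞)

theorem AddSubgroup.mem_of_zsmul_mem_of_isCoprime {G : Type*} [AddGroup G] (H : AddSubgroup G)
    {g : G} {m n : ℤ} (hmn : IsCoprime m n) (hm : m • g ∈ H) (hn : n • g ∈ H) : g ∈ H := by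
  obtain ⟨u, v, huv⟩ := hmn
  have hg : g = u • m • g + v • n • g := by
    rw [smul_smul, smul_smul, ← add_zsmul, huv, one_zsmul]
  rw [hg]
  exact H.add_mem (H.zsmul_mem hm u) (H.zsmul_mem hn v)

theorem one_div_mem_of_dvd {H : AddSubgroup ℚ} {a b : ℕ} (hab : a ∣ b) (hb : b ≠ 0)
    (h : (1 : ℚ) / b ∈ H) : (1 : ℚ) / a ∈ H := by
  obtain ⟨c, rfl⟩ := hab
  have hc : (c : ℚ) ≠ 0 := by exact_mod_cast right_ne_zero_of_mul hb
  have : (1 : ℚ) / a = c • ((1 : ℚ) / (a * c : ℕ)) := by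
    rw [nsmul_eq_mul]; push_cast; field_simp
  rw [this]
  exact H.nsmul_mem h c

theorem one_div_mul_mem_of_coprime {H : AddSubgroup ℚ} {a b : ℕ} (hab : a.Coprime b)
    (ha : (1 : ℚ) / a ∈ H) (hb : (1 : ℚ) / b ∈ H) : (1 : ℚ) / (a * b : ℕ) ∈ H := by
  obtain h0 | h0 := eq_or_ne (a * b) 0
  · simp [h0, H.zero_mem]
  have ha0 : (a : ℚ) ≠ 0 := by exact_mod_cast left_ne_zero_of_mul h0
  have hb0 : (b : ℚ) ≠ 0 := by exact_mod_cast right_ne_zero_of_mul h0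
  refine H.mem_of_zsmul_mem_of_isCoprime (Nat.Coprime.isCoprime hab.symm) ?_ ?_
  · convert ha using 1; rw [zsmul_eq_mul]; push_cast; field_simp
  · convert hb using 1; rw [zsmul_eq_mul]; push_cast; field_simp

theorem one_div_den_mem {H : AddSubgroup ℚ} (h1 : (1 : ℚ) ∈ H) {q : ℚ} (hq : q ∈ H) :
    (1 : ℚ) / q.den ∈ H := by
  refine H.mem_of_zsmul_mem_of_isCoprime q.isCoprime_num_den ?_ ?_
  · rwa [zsmul_eq_mul, mul_one_div, Rat.num_div_den]
  · rwa [zsmul_eq_mul, Int.cast_natCast, mul_one_div_cancel (by exact_mod_cast q.den_ne_zero)]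

theorem le_ratHeight_iff {A : AddSubgroup ℚ} (h1 : (1 : ℚ) ∈ A) {p : ℕ} (hp : p ≠ 0) {n : ℕ} :
    (n : ℕ∞) ≤ ratHeight A p ↔ (1 : ℚ) / p ^ n ∈ A := by
  refine ⟨fun hn => ?_, fun hn => le_iSup₂_of_le n hn le_rfl⟩
  cases n with
  | zero => simpa using h1
  | succ k =>
    rw [Nat.cast_add_one, ENat.add_one_le_iff (ENat.natCast_ne_top k), ratHeight, lt_biSup_iff] at hn
    obtain ⟨m, hm, hkm⟩ := hn
    have hkm : k + 1 ≤ m := by exact_mod_cast hkm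
    exact_mod_cast one_div_mem_of_dvd (pow_dvd_pow p hkm) (pow_ne_zero m hp) (by exact_mod_cast hm)

def ratHeightGenerators (A : AddSubgroup ℚ) : Set ℚ :=
  {x : ℚ | ∃ p n : ℕ, p.Prime ∧ (n : ℕ∞) ≤ ratHeight A p ∧ x = 1 / p ^ n}

theorem one_div_mem_closure_ratHeightGenerators {A : AddSubgroup ℚ} (h1 : (1 : ℚ) ∈ A) (b : ℕ)
    (hb : (1 : ℚ) / b ∈ A) : (1 : ℚ) / b ∈ AddSubgroup.closure (ratHeightGenerators A) := by
  induction b using Nat.recOnPrimeCoprime with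
  | zero => simp
  | prime_pow p n hp =>
    refine AddSubgroup.subset_closure ⟨p, n, hp, ?_, by push_cast; rfl⟩
    exact (le_ratHeight_iff h1 hp.ne_zero).2 (by exact_mod_cast hb)
  | coprime a b _ _ hab iha ihb =>
    have hab0 : a * b ≠ 0 := by positivity
    exact one_div_mul_mem_of_coprime hab (iha (one_div_mem_of_dvd (dvd_mul_right a b) hab0 hb))
      (ihb (one_div_mem_of_dvd (dvd_mul_left b a) hab0 hb))

/-- Every additive subgroup of `ℚ` containing `1` is generated by the fractions
`1/p^n` for primes `p` and exponents `n ≤ h_p(A)` (all `n` when `h_p(A) = ∞`). -/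
theorem rational_group_generated_by_prime_power_fractions
    (A : AddSubgroup ℚ) (h1 : (1 : ℚ) ∈ A) :
    A = AddSubgroup.closure
      {x : ℚ | ∃ p n : ℕ, p.Prime ∧ (n : ℕ∞) ≤ ratHeight A p ∧ x = 1 / p ^ n} := by
  refine le_antisymm (fun q hq => ?_) ((AddSubgroup.closure_le A).2 ?_)
  · have hden := one_div_mem_closure_ratHeightGenerators h1 q.den (one_div_den_mem h1 hq)
    rw [← Rat.num_div_den q, div_eq_mul_one_div, ← zsmul_eq_mul]
    exact AddSubgroup.zsmul_mem _ hden _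
  · rintro x ⟨p, n, hp, hn, rfl⟩
    exact_mod_cast (le_ratHeight_iff h1 hp.ne_zero).1 hn
end

section
/- Two additive subgroups A, B of ℚ each containing 1 are isomorphic as abelian groups if and only if there are nonzero homomorphisms A → B and B → A. -/
/-!
A homomorphism out of a subgroup of `ℚ` containing `1` is multiplication by its value at `1`,
so nonzero homomorphisms in both directions give positive integers `m, n` with `m • A ≤ B` and
`n • B ≤ A`. Then `A` and `B` both sit in `A ⊔ B` with `n • (A ⊔ B) ≤ A` and `m • (A ⊔ B) ≤ B`,
so it suffices that `A ≅ C` whenever `n • C ≤ A ≤ C`. Splitting off one prime of `n` at a time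
reduces this to `p • C ≤ A ≤ C`; since any two elements of `ℚ` are multiples of a common element
of the group they generate, `C / p • C` has at most `p` elements, so `A = C` or `A = p • C ≅ C`.
-/

open Pointwise

theorem AddEquiv.toAddMonoidHom_ne_zero {M N : Type*} [AddZeroClass M] [AddZeroClass N]
    [Nontrivial M] (e : M ≃+ N) : (e : M →+ N) ≠ 0 := by
  intro he
  obtain ⟨x, hx⟩ := exists_ne (0 : M)
  exact hx (e.injective (by simpa using DFunLike.congr_fun he x))

namespace AddSubgroup

noncomputable def equivSMul₀ {G₀ M : Type*} [GroupWithZero G₀] [AddGroup M]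
    [DistribMulAction G₀ M] {a : G₀} (ha : a ≠ 0) (S : AddSubgroup M) :
    S ≃+ (a • S : AddSubgroup M) :=
  S.equivMapOfInjective (DistribMulAction.toAddMonoidEnd G₀ M a) (MulAction.injective₀ ha)

theorem smul_sup_le {G₀ M : Type*} [GroupWithZero G₀] [AddGroup M]
    [DistribMulAction G₀ M] {a : G₀} {S T U : AddSubgroup M} (hS : a • S ≤ U) (hT : a • T ≤ U) :
    a • (S ⊔ T) ≤ U :=
  map_le_iff_le_comap.2 (sup_le (map_le_iff_le_comap.1 hS) (map_le_iff_le_comap.1 hT))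

theorem natCast_smul_le (n : ℕ) (A : AddSubgroup ℚ) : (n : ℚ) • A ≤ A := by
  rintro _ ⟨x, hx, rfl⟩
  simpa [← nsmul_eq_mul] using A.nsmul_mem hx n

theorem exists_zmultiples_mem_pair {C : AddSubgroup ℚ} {a c : ℚ} (ha : a ∈ C) (hc : c ∈ C) :
    ∃ z ∈ C, a ∈ zmultiples z ∧ c ∈ zmultiples z := by
  set i := a.num * c.den
  set j := c.num * a.den
  set t : ℚ := ((a.den * c.den : ℕ) : ℚ)⁻¹
  have hai : a = i * t := by
    have : (c.den : ℚ) ≠ 0 := by positivity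
    simp only [i, t]; push_cast; field_simp; exact Rat.mul_den_eq_num a
  have hcj : c = j * t := by
    have : (a.den : ℚ) ≠ 0 := by positivity
    simp only [j, t]; push_cast; field_simp; exact Rat.mul_den_eq_num c
  set g := Int.gcd i j
  obtain ⟨k, hk⟩ : (g : ℤ) ∣ i := Int.gcd_dvd_left i j
  obtain ⟨l, hl⟩ : (g : ℤ) ∣ j := Int.gcd_dvd_right i j
  refine ⟨g * t, ?_, mem_zmultiples_iff.2 ⟨k, ?_⟩, mem_zmultiples_iff.2 ⟨l, ?_⟩⟩
  · have hg : (g : ℚ) * t = Int.gcdA i j • a + Int.gcdB i j • c := by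
      rw [hai, hcj, zsmul_eq_mul, zsmul_eq_mul, ← Int.cast_natCast, Int.gcd_eq_gcd_ab i j]
      push_cast; ring
    rw [hg]
    exact add_mem (zsmul_mem ha _) (zsmul_mem hc _)
  · rw [hai, hk, zsmul_eq_mul]; push_cast; ring
  · rw [hcj, hl, zsmul_eq_mul]; push_cast; ring

theorem eq_or_eq_prime_smul_of_le {p : ℕ} (hp : p.Prime) {A C : AddSubgroup ℚ}
    (hpC : (p : ℚ) • C ≤ A) (hAC : A ≤ C) : A = C ∨ A = (p : ℚ) • C := by
  by_cases hCA : C ≤ A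
  · exact .inl (le_antisymm hAC hCA)
  obtain ⟨c, hcC, hcA⟩ := SetLike.not_le_iff_exists.1 hCA
  refine .inr (le_antisymm (fun a ha => ?_) hpC)
  obtain ⟨z, hzC, ⟨u, rfl⟩, ⟨v, rfl⟩⟩ := exists_zmultiples_mem_pair (hAC ha) hcC
  beta_reduce at ha hcA
  by_cases hpu : (p : ℤ) ∣ u
  · obtain ⟨w, rfl⟩ := hpu
    refine (mem_smul_pointwise_iff_exists _ _ _).2 ⟨w • z, zsmul_mem hzC w, ?_⟩
    simp only [smul_eq_mul, zsmul_eq_mul]; push_cast; ring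
  · obtain ⟨α, β, hαβ⟩ := (Nat.prime_iff_prime_int.1 hp).coprime_iff_not_dvd.2 hpu
    have hzA : z ∈ A := by
      have hz : z = α • ((p : ℚ) • z) + β • u • z := by
        have h := congrArg (Int.cast : ℤ → ℚ) hαβ
        push_cast at h
        simp only [zsmul_eq_mul, smul_eq_mul]
        linear_combination -z * h
      rw [hz]
      exact add_mem (zsmul_mem (hpC (smul_mem_pointwise_smul _ _ _ hzC)) α) (zsmul_mem ha β)
    exact absurd (zsmul_mem hzA v) hcA

theorem nonempty_addEquiv_of_smul_le_of_le {n : ℕ} (hn : n ≠ 0) {A C : AddSubgroup ℚ}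
    (hnC : (n : ℚ) • C ≤ A) (hAC : A ≤ C) : Nonempty (A ≃+ C) := by
  induction n using induction_on_primes generalizing A C with
  | zero => exact absurd rfl hn
  | one =>
    rw [Nat.cast_one, one_smul] at hnC
    exact ⟨.addSubgroupCongr (le_antisymm hAC hnC)⟩
  | prime_mul p a hp ih =>
    -- pass through `A ≤ A ⊔ a • C ≤ C`: `p` kills the bottom quotient, `a` the top one
    have ha : a ≠ 0 := right_ne_zero_of_mul hn
    have hp0 : (p : ℚ) ≠ 0 := by exact_mod_cast hp.ne_zero
    obtain ⟨eD⟩ := ih ha (le_sup_right (a := A)) (sup_le hAC (natCast_smul_le a C))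
    have hpD : (p : ℚ) • (A ⊔ (a : ℚ) • C) ≤ A :=
      smul_sup_le (natCast_smul_le p A) (by rwa [smul_smul, ← Nat.cast_mul])
    rcases eq_or_eq_prime_smul_of_le hp hpD le_sup_left with h | h
    · exact ⟨(AddEquiv.addSubgroupCongr h).trans eD⟩
    · exact ⟨(AddEquiv.addSubgroupCongr h).trans ((equivSMul₀ hp0 _).symm.trans eD)⟩

theorem addMonoidHom_apply_eq_mul {A : AddSubgroup ℚ} (hA : (1 : ℚ) ∈ A) (f : A →+ ℚ) (x : A) :
    f x = x * f ⟨1, hA⟩ := by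
  have hx : ((x : ℚ).den : ℤ) • x = (x : ℚ).num • (⟨1, hA⟩ : A) := by
    ext
    simp [zsmul_eq_mul]
  have hfx := congrArg f hx
  simp only [map_zsmul, zsmul_eq_mul, Int.cast_natCast] at hfx
  have hden : ((x : ℚ).den : ℚ) ≠ 0 := by positivity
  refine mul_left_cancel₀ hden ?_
  rw [hfx, ← Rat.mul_den_eq_num]
  ring

theorem exists_natCast_smul_le_of_ne_zero {A B : AddSubgroup ℚ} (hA : (1 : ℚ) ∈ A) {f : A →+ B}
    (hf : f ≠ 0) : ∃ n : ℕ, n ≠ 0 ∧ (n : ℚ) • A ≤ B := by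
  set q : ℚ := (f ⟨1, hA⟩ : ℚ)
  have hfq (x : A) : (f x : ℚ) = x * q := addMonoidHom_apply_eq_mul hA (B.subtype.comp f) x
  have hq : q ≠ 0 := by
    refine fun hq => hf (AddMonoidHom.ext fun x => Subtype.ext ?_)
    rw [hfq, hq, mul_zero, AddMonoidHom.zero_apply, ZeroMemClass.coe_zero]
  refine ⟨q.num.natAbs, by simpa using hq, ?_⟩
  intro y hy
  obtain ⟨x, hx, rfl⟩ := (mem_smul_pointwise_iff_exists _ _ _).1 hy
  have h : ((q.num.natAbs : ℚ)) • x = (q.num.sign * q.den) • (f ⟨x, hx⟩ : ℚ) := by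
    rw [hfq, smul_eq_mul, zsmul_eq_mul, ← Int.cast_natCast, ← Int.sign_mul_self_eq_natAbs]
    push_cast
    linear_combination (-(q.num.sign : ℚ) * x) * Rat.mul_den_eq_num q
  rw [h]
  exact zsmul_mem (f ⟨x, hx⟩).2 _

end AddSubgroup

open AddSubgroup in
/-- Two subgroups of `ℚ` containing `1` are isomorphic as abelian groups iff
there are nonzero homomorphisms in both directions. -/
theorem rational_groups_iso_iff_nonzero_homs (A B : AddSubgroup ℚ)
    (hA : (1 : ℚ) ∈ A) (hB : (1 : ℚ) ∈ B) :
    Nonempty (A ≃+ B) ↔ (∃ f : A →+ B, f ≠ 0) ∧ (∃ g : B →+ A, g ≠ 0) := by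
  constructor
  · rintro ⟨e⟩
    have : Nontrivial A := nontrivial_of_ne ⟨1, hA⟩ 0 (by simp)
    have : Nontrivial B := nontrivial_of_ne ⟨1, hB⟩ 0 (by simp)
    exact ⟨⟨e, e.toAddMonoidHom_ne_zero⟩, ⟨e.symm, e.symm.toAddMonoidHom_ne_zero⟩⟩
  · rintro ⟨⟨f, hf⟩, ⟨g, hg⟩⟩
    obtain ⟨m, hm0, hmA⟩ := exists_natCast_smul_le_of_ne_zero hA hf
    obtain ⟨n, hn0, hnB⟩ := exists_natCast_smul_le_of_ne_zero hB hg
    obtain ⟨eA⟩ := nonempty_addEquiv_of_smul_le_of_le hn0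
      (smul_sup_le (natCast_smul_le n A) hnB) le_sup_left
    obtain ⟨eB⟩ := nonempty_addEquiv_of_smul_le_of_le hm0
      (smul_sup_le hmA (natCast_smul_le m B)) le_sup_right
    exact ⟨eA.trans eB.symm⟩
end

section
/- Two nonzero subgroups A, B of ℚ are isomorphic as abelian groups if and only if their height sequences (h_2, h_3, h_5, ...) are equivalent, i.e., h_p(A) = h_p(B) for all but finitely many primes p, and whenever they differ, both values are finite. -/
/-!
An additive map between subgroups of `ℚ` is multiplication by a rational, so `A ≃+ B` exactly
when `t ∈ A ↔ c * t ∈ B` for some `c ≠ 0`; such a scaling preserves heights. In a torsion-free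
group `h_p(m x) = h_p(x) + v_p(m)` for every integer `m ≠ 0`, and any two nonzero elements of a
rank-one group satisfy `n y = m x`, so their height sequences differ only at the primes dividing
`m n`, and only by finite amounts.

Conversely, multiplying `a` and `b` by suitable integers makes their height sequences equal.
Then `t ↦ (b / a) t` maps `A` onto `B`: by Bézout, `x / n ∈ A` as soon as `x / p ^ v_p(n) ∈ A`
for every prime `p`, i.e. as soon as `v_p(n) ≤ h_p(x)` for every `p`.
-/

/-- The p-height in `A ≤ ℚ` of an element `a`: the supremum in `ℕ∞` of the
exponents `n` such that `a` is divisible by `p^n` within `A`. -/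
noncomputable def elemHeight (A : AddSubgroup ℚ) (a : ℚ) (p : ℕ) : ℕ∞ :=
  ⨆ n ∈ {n : ℕ | ∃ b ∈ A, (p : ℚ) ^ n * b = a}, (n : ℕ∞)

section Heights

variable {A B : AddSubgroup ℚ} {x y : ℚ} {p : ℕ}

lemma div_pow_mem_of_le (hp : p ≠ 0) {k n : ℕ} (hkn : k ≤ n) (h : x / p ^ n ∈ A) :
    x / p ^ k ∈ A := by
  have hx : x / p ^ k = (p ^ (n - k) : ℕ) • (x / p ^ n) := by
    rw [nsmul_eq_mul, Nat.cast_pow, ← Nat.sub_add_cancel hkn, pow_add, Nat.add_sub_cancel]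
    field_simp
  exact hx ▸ nsmul_mem h _

lemma natCast_le_elemHeight_iff (hx : x ∈ A) (hp : p ≠ 0) (k : ℕ) :
    (k : ℕ∞) ≤ elemHeight A x p ↔ x / p ^ k ∈ A := by
  have hdiv : ∀ n, (∃ b ∈ A, (p : ℚ) ^ n * b = x) ↔ x / p ^ n ∈ A := fun n => by
    have : (p : ℚ) ^ n ≠ 0 := by positivity
    exact ⟨by rintro ⟨b, hb, rfl⟩; rwa [mul_div_cancel_left₀ _ this],
      fun h => ⟨_, h, mul_div_cancel₀ _ this⟩⟩
  refine ⟨fun hk => ?_, fun hk => le_biSup (fun n : ℕ => (n : ℕ∞)) ((hdiv k).2 hk)⟩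
  by_contra hkA
  obtain ⟨j, rfl⟩ : ∃ j, k = j + 1 :=
    Nat.exists_eq_succ_of_ne_zero (by rintro rfl; simp_all)
  have hle : elemHeight A x p ≤ j := iSup₂_le fun n hn => Nat.cast_le.2 <| by
    by_contra! hjn
    exact hkA (div_pow_mem_of_le hp hjn ((hdiv n).1 hn))
  exact absurd (hk.trans hle) (by norm_cast; omega)

lemma elemHeight_eq_of_div_pow_mem_iff (hx : x ∈ A) (hy : y ∈ B) (hp : p ≠ 0)
    (h : ∀ k : ℕ, x / p ^ k ∈ A ↔ y / p ^ k ∈ B) : elemHeight A x p = elemHeight B y p :=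
  ENat.eq_of_forall_natCast_le_iff fun k => by
    rw [natCast_le_elemHeight_iff hx hp, natCast_le_elemHeight_iff hy hp, h]

lemma elemHeight_mul_of_mem_iff {c : ℚ} (hc : c ≠ 0) (h : ∀ t, t ∈ A ↔ c * t ∈ B) :
    elemHeight B (c * x) p = elemHeight A x p := by
  have hS : {n : ℕ | ∃ b ∈ B, (p : ℚ) ^ n * b = c * x} =
      {n | ∃ b ∈ A, (p : ℚ) ^ n * b = x} := by
    ext n
    constructor
    · rintro ⟨b, hb, hbx⟩
      refine ⟨c⁻¹ * b, (h _).2 (by rwa [mul_inv_cancel_left₀ hc]), ?_⟩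
      rw [mul_left_comm, hbx, inv_mul_cancel_left₀ hc]
    · rintro ⟨b, hb, rfl⟩
      exact ⟨c * b, (h b).1 hb, mul_left_comm _ _ _⟩
  rw [elemHeight, elemHeight, hS]

lemma elemHeight_neg (hx : x ∈ A) (hp : p ≠ 0) : elemHeight A (-x) p = elemHeight A x p :=
  elemHeight_eq_of_div_pow_mem_iff (neg_mem hx) hx hp fun k => by rw [neg_div, neg_mem_iff]

lemma natCast_mul_mem (hx : x ∈ A) (m : ℕ) : (m : ℚ) * x ∈ A := by
  simpa only [nsmul_eq_mul] using nsmul_mem hx m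

lemma elemHeight_natCast_mul_of_not_dvd (hx : x ∈ A) (hp : p.Prime) {r : ℕ} (hr : ¬p ∣ r) :
    elemHeight A (r * x) p = elemHeight A x p := by
  refine elemHeight_eq_of_div_pow_mem_iff (natCast_mul_mem hx r) hx hp.ne_zero fun k => ?_
  refine ⟨fun h => ?_, fun h => mul_div_assoc (r : ℚ) x _ ▸ natCast_mul_mem h r⟩
  obtain ⟨u, v, huv⟩ := Nat.isCoprime_iff_coprime.2 <|
    ((Nat.Prime.coprime_iff_not_dvd hp).2 hr).symm.pow_right k
  have huv' : (u : ℚ) * r + v * p ^ k = 1 := by exact_mod_cast huv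
  have hp0 : (p : ℚ) ≠ 0 := by exact_mod_cast hp.ne_zero
  have hx' : x / p ^ k = u • (r * x / p ^ k) + v • x := by
    rw [zsmul_eq_mul, zsmul_eq_mul]
    field_simp
    linear_combination (-x) * huv'
  exact hx' ▸ add_mem (zsmul_mem h u) (zsmul_mem hx v)

lemma elemHeight_pow_mul (hx : x ∈ A) (hp : p ≠ 0) (e : ℕ) :
    elemHeight A (p ^ e * x) p = elemHeight A x p + e := by
  have hpe : (p : ℚ) ^ e * x ∈ A := by exact_mod_cast natCast_mul_mem hx (p ^ e)
  refine ENat.eq_of_forall_natCast_le_iff fun k => ?_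
  rw [natCast_le_elemHeight_iff hpe hp]
  rcases le_or_gt k e with hke | hek
  · have hmem : (p : ℚ) ^ e * x / p ^ k = (p : ℚ) ^ (e - k) * x := by
      rw [← Nat.sub_add_cancel hke, pow_add, Nat.add_sub_cancel]
      field_simp
    exact iff_of_true (hmem ▸ by exact_mod_cast natCast_mul_mem hx (p ^ (e - k)))
      (le_add_left (Nat.cast_le.2 hke))
  · obtain ⟨j, rfl⟩ := Nat.exists_eq_add_of_le hek.le
    have hmem : (p : ℚ) ^ e * x / p ^ (e + j) = x / p ^ j := by
      rw [pow_add]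
      field_simp
    rw [hmem, ← natCast_le_elemHeight_iff hx hp, Nat.cast_add, add_comm (e : ℕ∞),
      ENat.add_le_add_iff_right (ENat.natCast_ne_top e)]

lemma elemHeight_natCast_mul (hx : x ∈ A) (hp : p.Prime) {m : ℕ} (hm : m ≠ 0) :
    elemHeight A (m * x) p = elemHeight A x p + m.factorization p := by
  set r := m / p ^ m.factorization p
  have hm' : (m : ℚ) * x = p ^ m.factorization p * (r * x) := by
    rw [← mul_assoc]
    exact_mod_cast congrArg (fun n : ℕ => (n : ℚ) * x)
      (Nat.ordProj_mul_ordCompl_eq_self m p).symm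
  rw [hm', elemHeight_pow_mul (natCast_mul_mem hx r) hp.ne_zero,
    elemHeight_natCast_mul_of_not_dvd hx hp (Nat.not_dvd_ordCompl hp hm)]

lemma elemHeight_intCast_mul (hx : x ∈ A) (hp : p.Prime) {m : ℤ} (hm : m ≠ 0) :
    elemHeight A (m * x) p = elemHeight A x p + m.natAbs.factorization p := by
  obtain ⟨k, rfl | rfl⟩ := Int.eq_nat_or_neg m
  · exact_mod_cast elemHeight_natCast_mul hx hp (by omega)
  · rw [Int.cast_neg, Int.cast_natCast, neg_mul,
      elemHeight_neg (natCast_mul_mem hx _) hp.ne_zero, Int.natAbs_neg, Int.natAbs_natCast]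
    exact elemHeight_natCast_mul hx hp (by omega)

lemma exists_elemHeight_add_eq (hx : x ∈ A) (hy : y ∈ A) (hx0 : x ≠ 0) (hy0 : y ≠ 0) :
    ∃ m n : ℕ, ∀ p, p.Prime →
      elemHeight A x p + m.factorization p = elemHeight A y p + n.factorization p := by
  set q := y / x
  have hq : (q.num : ℚ) * x = q.den * y := by
    rw [← q.mul_den_eq_num, mul_right_comm, div_mul_cancel₀ y hx0, mul_comm]
  refine ⟨q.num.natAbs, q.den, fun p hp => ?_⟩
  rw [← elemHeight_intCast_mul hx hp (Rat.num_ne_zero.2 (div_ne_zero hy0 hx0)), hq,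
    elemHeight_natCast_mul hy hp q.den_nz]

end Heights

def HeightSeqEquiv (h h' : ℕ → ℕ∞) : Prop :=
  {p : ℕ | p.Prime ∧ h p ≠ h' p}.Finite ∧
    ∀ p : ℕ, p.Prime → h p ≠ h' p → h p ≠ ⊤ ∧ h' p ≠ ⊤

lemma heightSeqEquiv_of_add_eq {h h' : ℕ → ℕ∞} (m n : ℕ)
    (H : ∀ p, p.Prime → h p + m.factorization p = h' p + n.factorization p) :
    HeightSeqEquiv h h' := by
  refine ⟨(m.primeFactors ∪ n.primeFactors).finite_toSet.subset fun p ⟨hp, hne⟩ => ?_,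
    fun p hp hne => ⟨fun htop => hne ?_, fun htop => hne ?_⟩⟩
  · by_contra hpmn
    simp only [Finset.coe_union, Set.mem_union, Finset.mem_coe, not_or,
      ← Nat.support_factorization, Finsupp.notMem_support_iff] at hpmn
    exact hne (by simpa [hpmn] using H p hp)
  · have := H p hp
    rw [htop, top_add, eq_comm, ENat.add_eq_top] at this
    simp_all
  · have := H p hp
    rw [htop, top_add, ENat.add_eq_top] at this
    simp_all

lemma factorization_prod_pow_apply {S : Finset ℕ} (hS : ∀ p ∈ S, p.Prime) (g : ℕ → ℕ)
    (q : ℕ) :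
    (∏ p ∈ S, p ^ g p).factorization q = if q ∈ S then g q else 0 := by
  rw [Nat.factorization_prod fun p hp => pow_ne_zero _ (hS p hp).ne_zero, Finset.sum_apply',
    Finset.sum_congr rfl fun p hp => by rw [(hS p hp).factorization_pow]]
  simp [Finsupp.single_apply]

lemma exists_add_eq_of_heightSeqEquiv {h h' : ℕ → ℕ∞} (H : HeightSeqEquiv h h') :
    ∃ m n : ℕ, m ≠ 0 ∧ n ≠ 0 ∧
      ∀ p, p.Prime → h p + m.factorization p = h' p + n.factorization p := by
  obtain ⟨hfin, hfinite⟩ := H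
  have hS : ∀ p ∈ hfin.toFinset, p.Prime := fun p hp => (hfin.mem_toFinset.1 hp).1
  have hprod (g : ℕ → ℕ) : ∏ p ∈ hfin.toFinset, p ^ g p ≠ 0 :=
    Finset.prod_ne_zero_iff.2 fun p hp => pow_ne_zero _ (hS p hp).ne_zero
  refine ⟨_, _, hprod fun p => (h' p).toNat - (h p).toNat,
    hprod fun p => (h p).toNat - (h' p).toNat, fun p hp => ?_⟩
  rw [factorization_prod_pow_apply hS, factorization_prod_pow_apply hS]
  split_ifs with hpS
  · obtain ⟨hA, hB⟩ := hfinite p hp (hfin.mem_toFinset.1 hpS).2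
    lift h p to ℕ using hA with α
    lift h' p to ℕ using hB with β
    simp only [ENat.toNat_natCast]
    norm_cast
    omega
  · have : h p = h' p := by_contra fun hne => hpS (hfin.mem_toFinset.2 ⟨hp, hne⟩)
    simp [this]

section Divisibility

variable {A B : AddSubgroup ℚ} {x y t : ℚ}

lemma div_mul_mem_of_coprime {m n : ℕ} (hmn : m.Coprime n) (hm : m ≠ 0) (hn : n ≠ 0)
    (h₁ : x / m ∈ A) (h₂ : x / n ∈ A) : x / (m * n : ℕ) ∈ A := by
  obtain ⟨u, v, huv⟩ := Nat.isCoprime_iff_coprime.2 hmn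
  have huv' : (u : ℚ) * m + v * n = 1 := by exact_mod_cast huv
  have hx : x / (m * n : ℕ) = u • (x / n) + v • (x / m) := by
    rw [zsmul_eq_mul, zsmul_eq_mul, Nat.cast_mul]
    field_simp
    linear_combination (-x) * huv'
  exact hx ▸ add_mem (zsmul_mem h₂ u) (zsmul_mem h₁ v)

lemma div_natCast_mem_iff (hx : x ∈ A) {n : ℕ} (hn : n ≠ 0) :
    x / n ∈ A ↔ ∀ p, p.Prime → (n.factorization p : ℕ∞) ≤ elemHeight A x p := by
  refine ⟨fun h p hp => ?_, fun h => ?_⟩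
  · rw [natCast_le_elemHeight_iff hx hp.ne_zero]
    obtain ⟨r, hr⟩ := Nat.ordProj_dvd n p
    generalize n.factorization p = v at hr ⊢
    have hr0 : (r : ℚ) ≠ 0 := by rintro h0; simp_all
    have hn' : x / p ^ v = r * (x / n) := by
      rw [hr, Nat.cast_mul, Nat.cast_pow]
      field_simp
    exact hn' ▸ natCast_mul_mem h r
  · induction n using Nat.recOnPrimeCoprime with
    | zero => exact absurd rfl hn
    | prime_pow p k hp =>
      have := h p hp
      rw [hp.factorization_pow, Finsupp.single_eq_same,
        natCast_le_elemHeight_iff hx hp.ne_zero] at this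
      exact_mod_cast this
    | coprime m n hm hn' hmn ihm ihn =>
      have hdvd {d : ℕ} (hd : d ∣ m * n) (p : ℕ) (hp : p.Prime) :
          (d.factorization p : ℕ∞) ≤ elemHeight A x p :=
        (Nat.cast_le.2 <|
          (Nat.factorization_le_iff_dvd (ne_zero_of_dvd_ne_zero hn hd) hn).2 hd p).trans (h p hp)
      exact_mod_cast div_mul_mem_of_coprime hmn (by omega) (by omega)
        (ihm (by omega) (hdvd (dvd_mul_right m n))) (ihn (by omega) (hdvd (dvd_mul_left n m)))

lemma div_den_div_mem (hx : x ∈ A) (hx0 : x ≠ 0) (ht : t ∈ A) : x / (t / x).den ∈ A := by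
  set q := t / x
  obtain ⟨u, v, huv⟩ := q.isCoprime_num_den
  have huv' : (u : ℚ) * q.num + v * q.den = 1 := by exact_mod_cast huv
  have hq : t = q.num / q.den * x := by rw [Rat.num_div_den, div_mul_cancel₀ t hx0]
  have hx' : x / q.den = u • t + v • x := by
    rw [zsmul_eq_mul, zsmul_eq_mul, hq]
    field_simp
    linear_combination (-1) * huv'
  exact hx' ▸ add_mem (zsmul_mem ht u) (zsmul_mem hx v)

lemma div_mul_mem_of_elemHeight_le (hx : x ∈ A) (hy : y ∈ B) (hx0 : x ≠ 0)
    (h : ∀ p, p.Prime → elemHeight A x p ≤ elemHeight B y p) (ht : t ∈ A) :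
    y / x * t ∈ B := by
  set q := t / x
  have hyq : y / q.den ∈ B := (div_natCast_mem_iff hy q.den_nz).2 fun p hp =>
    ((div_natCast_mem_iff hx q.den_nz).1 (div_den_div_mem hx hx0 ht) p hp).trans (h p hp)
  have hq : y / x * t = q.num • (y / q.den) := by
    rw [zsmul_eq_mul, ← mul_div_assoc, ← div_mul_eq_mul_div, Rat.num_div_den]
    ring
  exact hq ▸ zsmul_mem hyq _

end Divisibility

section Isomorphisms

variable {A B : AddSubgroup ℚ}

noncomputable def addEquivOfMemIffMulMem {c : ℚ} (hc : c ≠ 0)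
    (h : ∀ t, t ∈ A ↔ c * t ∈ B) : A ≃+ B where
  toFun t := ⟨c * t, (h t).1 t.2⟩
  invFun s := ⟨c⁻¹ * s, (h _).2 (by rw [mul_inv_cancel_left₀ hc]; exact s.2)⟩
  left_inv t := Subtype.ext (inv_mul_cancel_left₀ hc t)
  right_inv s := Subtype.ext (mul_inv_cancel_left₀ hc s)
  map_add' s t := Subtype.ext (mul_add c s t)

lemma AddMonoidHom.apply_eq_div_mul (f : A →+ ℚ) {a : ℚ} (ha : a ∈ A) (ha0 : a ≠ 0)
    (t : A) : f t = f ⟨a, ha⟩ / a * t := by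
  set q := (t : ℚ) / a
  have hq : q.den • t = q.num • (⟨a, ha⟩ : A) := Subtype.ext <| by
    simp only [AddSubgroup.coe_nsmul, AddSubgroup.coe_zsmul, nsmul_eq_mul, zsmul_eq_mul]
    rw [← q.mul_den_eq_num, mul_right_comm, div_mul_cancel₀ _ ha0, mul_comm]
  have hf := congrArg f hq
  rw [map_nsmul, map_zsmul, nsmul_eq_mul, zsmul_eq_mul] at hf
  have hden : (q.den : ℚ) ≠ 0 := by exact_mod_cast q.den_nz
  have hfq : f t = q * f ⟨a, ha⟩ :=
    mul_left_cancel₀ hden (by linear_combination hf - f ⟨a, ha⟩ * q.mul_den_eq_num)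
  rw [hfq, div_mul_eq_mul_div, mul_div_assoc, mul_comm]

lemma exists_mul_mem_iff_of_addEquiv (e : A ≃+ B) {a : ℚ} (ha : a ∈ A) (ha0 : a ≠ 0) :
    ∃ c : ℚ, c ≠ 0 ∧ ∀ t, t ∈ A ↔ c * t ∈ B := by
  set f : A →+ ℚ := B.subtype.comp e.toAddMonoidHom
  have hf (t : A) : (e t : ℚ) = f ⟨a, ha⟩ / a * t := f.apply_eq_div_mul ha ha0 t
  have hc : f ⟨a, ha⟩ / a ≠ 0 := div_ne_zero (fun h0 => ha0 <|
    congrArg Subtype.val <| (map_eq_zero_iff e e.injective).1 (Subtype.ext h0)) ha0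
  refine ⟨_, hc, fun t => ⟨fun ht => hf ⟨t, ht⟩ ▸ (e ⟨t, ht⟩).2, fun ht => ?_⟩⟩
  have := hf (e.symm ⟨_, ht⟩)
  rw [e.apply_symm_apply] at this
  exact mul_left_cancel₀ hc this ▸ (e.symm _).2

end Isomorphisms

/-- Two nonzero subgroups of `ℚ` are isomorphic iff their height sequences
(computed at fixed nonzero elements) are equivalent: they agree at all but
finitely many primes, and whenever they differ both values are finite. -/
theorem rational_groups_iso_iff_equivalent_height_sequences
    (A B : AddSubgroup ℚ) (a b : ℚ) (haA : a ∈ A) (ha : a ≠ 0)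
    (hbB : b ∈ B) (hb : b ≠ 0) :
    Nonempty (A ≃+ B) ↔
      {p : ℕ | p.Prime ∧ elemHeight A a p ≠ elemHeight B b p}.Finite ∧
        ∀ p : ℕ, p.Prime → elemHeight A a p ≠ elemHeight B b p →
          elemHeight A a p ≠ ⊤ ∧ elemHeight B b p ≠ ⊤ := by
  change _ ↔ HeightSeqEquiv (elemHeight A a) (elemHeight B b)
  constructor
  · rintro ⟨e⟩
    obtain ⟨c, hc, hAB⟩ := exists_mul_mem_iff_of_addEquiv e haA ha
    obtain ⟨m, n, hmn⟩ := exists_elemHeight_add_eq ((hAB a).1 haA) hbB (mul_ne_zero hc ha) hb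
    refine heightSeqEquiv_of_add_eq m n fun p hp => ?_
    rw [← elemHeight_mul_of_mem_iff hc hAB]
    exact hmn p hp
  · intro H
    obtain ⟨m, n, hm, hn, hmn⟩ := exists_add_eq_of_heightSeqEquiv H
    have hma : (m : ℚ) * a ∈ A := natCast_mul_mem haA m
    have hnb : (n : ℚ) * b ∈ B := natCast_mul_mem hbB n
    have hma0 : (m : ℚ) * a ≠ 0 := mul_ne_zero (by exact_mod_cast hm) ha
    have hnb0 : (n : ℚ) * b ≠ 0 := mul_ne_zero (by exact_mod_cast hn) hb
    have heq : ∀ p, p.Prime → elemHeight A (m * a) p = elemHeight B (n * b) p := fun p hp => by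
      rw [elemHeight_natCast_mul haA hp hm, elemHeight_natCast_mul hbB hp hn, hmn p hp]
    refine ⟨addEquivOfMemIffMulMem (div_ne_zero hnb0 hma0) fun t =>
      ⟨div_mul_mem_of_elemHeight_le hma hnb hma0 fun p hp => (heq p hp).le, fun ht => ?_⟩⟩
    have := div_mul_mem_of_elemHeight_le hnb hma hnb0 (fun p hp => (heq p hp).ge) ht
    rwa [← mul_assoc, div_mul_div_cancel₀ hnb0, div_self hma0, one_mul] at this
end
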